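/- arXiv:2005.09523 — 6 statements merged into one kernel-verified Lean document; each statement's English description precedes it below -/
import Mathlib

section
/- For k ∈ (0,1), the derivative of K satisfies K'(k) = (E(k) - (1-k²)K(k)) / (k(1-k²)). -/
/-!
Write `Δ = 1 - k² sin²θ` and `J(k) = ∫₀^{π/2} Δ^{-3/2} dθ`. Differentiating under the
integral sign, `K'(k) = ∫ k sin²θ Δ^{-3/2}`, and since `k² sin²θ = 1 - Δ` this is `(J - K) / k`.
On the other hand `k² sinθ cosθ Δ^{-1/2}` has `θ`-derivative `Δ^{1/2} - (1 - k²) Δ^{-3/2}` and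
vanishes at `0` and `π/2`, so `E = (1 - k²) J`. Eliminating `J` gives the formula.
-/

open Real Set intervalIntegral

noncomputable def K (k : ℝ) : ℝ :=
  ∫ θ in (0:ℝ)..(Real.pi/2), 1 / Real.sqrt (1 - k^2 * Real.sin θ ^ 2)

noncomputable def E (k : ℝ) : ℝ :=
  ∫ θ in (0:ℝ)..(Real.pi/2), Real.sqrt (1 - k^2 * Real.sin θ ^ 2)

noncomputable def J (k : ℝ) : ℝ :=
  ∫ θ in (0:ℝ)..(π / 2), 1 / ((1 - k ^ 2 * sin θ ^ 2) * √(1 - k ^ 2 * sin θ ^ 2))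

lemma one_sub_sq_mul_sin_sq_pos {k : ℝ} (hk : |k| < 1) (θ : ℝ) :
    0 < 1 - k ^ 2 * sin θ ^ 2 := by
  have := (sq_lt_one_iff_abs_lt_one k).2 hk
  nlinarith [sin_sq_le_one θ, sq_nonneg (sin θ)]

lemma hasDerivAt_one_div_sqrt_one_sub_sq_mul {x c : ℝ} (h : 0 < 1 - x ^ 2 * c) :
    HasDerivAt (fun y => 1 / √(1 - y ^ 2 * c))
      (x * c / ((1 - x ^ 2 * c) * √(1 - x ^ 2 * c))) x := by
  have hinner : HasDerivAt (fun y => 1 - y ^ 2 * c) (-(2 * x * c)) x := by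
    simpa using ((hasDerivAt_pow 2 x).mul_const c).const_sub 1
  have hsqrt : √(1 - x ^ 2 * c) ≠ 0 := (sqrt_pos.2 h).ne'
  simp only [one_div]
  refine ((hinner.sqrt h.ne').inv hsqrt).congr_deriv ?_
  rw [sq_sqrt h.le]
  field_simp

lemma continuous_div_one_sub_sq_mul_sin_sq_mul_sqrt {k : ℝ} (hk : |k| < 1) {f : ℝ → ℝ}
    (hf : Continuous f) :
    Continuous fun θ => f θ / ((1 - k ^ 2 * sin θ ^ 2) * √(1 - k ^ 2 * sin θ ^ 2)) := by
  refine hf.div (by fun_prop) fun θ => ?_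
  have h := one_sub_sq_mul_sin_sq_pos hk θ
  exact (mul_pos h (sqrt_pos.2 h)).ne'

lemma continuous_one_div_sqrt_one_sub_sq_mul_sin_sq {k : ℝ} (hk : |k| < 1) :
    Continuous fun θ => 1 / √(1 - k ^ 2 * sin θ ^ 2) :=
  continuous_const.div (by fun_prop) fun θ => (sqrt_pos.2 (one_sub_sq_mul_sin_sq_pos hk θ)).ne'

lemma hasDerivAt_K {k : ℝ} (hk : |k| < 1) :
    HasDerivAt K (∫ θ in (0:ℝ)..(π / 2),
      k * sin θ ^ 2 / ((1 - k ^ 2 * sin θ ^ 2) * √(1 - k ^ 2 * sin θ ^ 2))) k := by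
  obtain ⟨r, hkr, hr⟩ := exists_between hk
  rw [abs_lt] at hkr
  have habs : ∀ x ∈ Ioo (-r) r, |x| < 1 := fun x hx =>
    abs_lt.2 ⟨by linarith [hx.1], by linarith [hx.2]⟩
  have hbound : ∀ θ, ∀ x ∈ Ioo (-r) r,
      ‖x * sin θ ^ 2 / ((1 - x ^ 2 * sin θ ^ 2) * √(1 - x ^ 2 * sin θ ^ 2))‖ ≤
        1 / ((1 - r ^ 2) * √(1 - r ^ 2)) := by
    intro θ x hx
    have hΔ := one_sub_sq_mul_sin_sq_pos (habs x hx) θ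
    have hxr : x ^ 2 < r ^ 2 := sq_lt_sq' hx.1 hx.2
    have hΔr : 1 - r ^ 2 ≤ 1 - x ^ 2 * sin θ ^ 2 := by
      nlinarith [sin_sq_le_one θ, sq_nonneg (sin θ)]
    have hnum : |x| * sin θ ^ 2 ≤ 1 := by
      nlinarith [sin_sq_le_one θ, sq_nonneg (sin θ), habs x hx, abs_nonneg x]
    rw [norm_div, norm_mul, norm_of_nonneg (sq_nonneg _),
      norm_of_nonneg (mul_pos hΔ (sqrt_pos.2 hΔ)).le, Real.norm_eq_abs]
    have hr2 : 0 < 1 - r ^ 2 := by nlinarith [abs_nonneg k]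
    gcongr
  have h := hasDerivAt_integral_of_dominated_loc_of_deriv_le (μ := MeasureTheory.volume)
    (a := 0) (b := π / 2) (bound := fun _ => 1 / ((1 - r ^ 2) * √(1 - r ^ 2)))
    (F' := fun x θ => x * sin θ ^ 2 / ((1 - x ^ 2 * sin θ ^ 2) * √(1 - x ^ 2 * sin θ ^ 2)))
    (Ioo_mem_nhds hkr.1 hkr.2)
    (Filter.eventually_of_mem (Ioo_mem_nhds hkr.1 hkr.2) fun x hx =>
      (continuous_one_div_sqrt_one_sub_sq_mul_sin_sq (habs x hx)).aestronglyMeasurable)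
    ((continuous_one_div_sqrt_one_sub_sq_mul_sin_sq hk).intervalIntegrable _ _)
    ((continuous_div_one_sub_sq_mul_sin_sq_mul_sqrt hk (by fun_prop)).aestronglyMeasurable)
    (MeasureTheory.ae_of_all _ fun θ _ => hbound θ) intervalIntegrable_const
    (MeasureTheory.ae_of_all _ fun θ _ x hx => hasDerivAt_one_div_sqrt_one_sub_sq_mul
      (one_sub_sq_mul_sin_sq_pos (habs x hx) θ))
  exact h.2

lemma hasDerivAt_sq_mul_sin_mul_cos_div_sqrt {k : ℝ} (hk : |k| < 1) (θ : ℝ) :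
    HasDerivAt (fun t => k ^ 2 * (sin t * cos t / √(1 - k ^ 2 * sin t ^ 2)))
      (√(1 - k ^ 2 * sin θ ^ 2) -
        (1 - k ^ 2) / ((1 - k ^ 2 * sin θ ^ 2) * √(1 - k ^ 2 * sin θ ^ 2))) θ := by
  have hΔ := one_sub_sq_mul_sin_sq_pos hk θ
  have hnum : HasDerivAt (fun t => sin t * cos t) (cos θ ^ 2 - sin θ ^ 2) θ :=
    ((hasDerivAt_sin θ).mul (hasDerivAt_cos θ)).congr_deriv (by ring)
  have hinner : HasDerivAt (fun t => 1 - k ^ 2 * sin t ^ 2)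
      (-(2 * k ^ 2 * sin θ * cos θ)) θ := by
    simpa using (((hasDerivAt_sin θ).pow 2).const_mul (k ^ 2)).const_sub 1 |>.congr_deriv (by ring)
  refine ((hnum.div (hinner.sqrt hΔ.ne') (sqrt_pos.2 hΔ).ne').const_mul (k ^ 2)).congr_deriv ?_
  field_simp
  rw [sq_sqrt hΔ.le]
  linear_combination k ^ 2 * (1 - k ^ 2 * sin θ ^ 2) * sin_sq_add_cos_sq θ

lemma E_eq_one_sub_sq_mul_J {k : ℝ} (hk : |k| < 1) : E k = (1 - k ^ 2) * J k := by
  have hE := (by fun_prop : Continuous fun θ => √(1 - k ^ 2 * sin θ ^ 2)).intervalIntegrable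
    (μ := MeasureTheory.volume) 0 (π / 2)
  have hJ := (continuous_div_one_sub_sq_mul_sin_sq_mul_sqrt hk
    (continuous_const (y := 1 - k ^ 2))).intervalIntegrable (μ := MeasureTheory.volume)
    0 (π / 2)
  have hFTC := integral_eq_sub_of_hasDerivAt
    (fun θ _ => hasDerivAt_sq_mul_sin_mul_cos_div_sqrt hk θ) (hE.sub hJ)
  have hJ_eq : ∫ θ in (0:ℝ)..(π / 2),
      (1 - k ^ 2) / ((1 - k ^ 2 * sin θ ^ 2) * √(1 - k ^ 2 * sin θ ^ 2)) = (1 - k ^ 2) * J k := by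
    simp_rw [J, ← integral_const_mul, mul_one_div]
  rw [integral_sub hE hJ, hJ_eq] at hFTC
  simpa [E, sub_eq_zero] using hFTC

lemma mul_integral_sin_sq_div_eq_J_sub_K {k : ℝ} (hk : |k| < 1) :
    k * ∫ θ in (0:ℝ)..(π / 2),
      k * sin θ ^ 2 / ((1 - k ^ 2 * sin θ ^ 2) * √(1 - k ^ 2 * sin θ ^ 2)) = J k - K k := by
  rw [J, K, ← integral_const_mul, ← integral_sub
    ((continuous_div_one_sub_sq_mul_sin_sq_mul_sqrt hk continuous_const).intervalIntegrable _ _)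
    ((continuous_one_div_sqrt_one_sub_sq_mul_sin_sq hk).intervalIntegrable _ _)]
  refine integral_congr fun θ _ => ?_
  have hΔ := one_sub_sq_mul_sin_sq_pos hk θ
  field_simp
  ring

theorem deriv_K (k : ℝ) (hk : k ∈ Set.Ioo (0:ℝ) 1) :
    deriv K k = (E k - (1 - k^2) * K k) / (k * (1 - k^2)) := by
  obtain ⟨hk0, hk1⟩ := hk
  have hk_abs : |k| < 1 := by rwa [abs_of_pos hk0]
  have hk_sq : 0 < 1 - k ^ 2 := by nlinarith
  have hJK := mul_integral_sin_sq_div_eq_J_sub_K hk_abs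
  rw [(hasDerivAt_K hk_abs).deriv, E_eq_one_sub_sq_mul_J hk_abs, eq_div_iff (mul_pos hk0 hk_sq).ne']
  linear_combination (1 - k ^ 2) * hJK
end

section
/- The map k ↦ E(k) + K(k) is strictly increasing on (0,1). -/
open Real Set intervalIntegral

lemma aux_xinv {x y : ℝ} (hy : 0 < y) (hxy : y < x) (hx : x ≤ 1) :
    x + 1/x < y + 1/y := by
  have hx0 : 0 < x := hy.trans hxy
  have hxy1 : x * y < 1 := by nlinarith
  have h : y + 1/y - (x + 1/x) = (x - y) * (1 - x*y) / (x*y) := by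
    field_simp; ring
  have hp := div_pos (mul_pos (sub_pos.2 hxy) (sub_pos.2 hxy1)) (mul_pos hx0 hy)
  linarith

lemma pos_denom {k θ : ℝ} (hk0 : 0 ≤ k) (hk1 : k < 1) :
    0 < 1 - k^2 * Real.sin θ ^ 2 := by
  have h1 : Real.sin θ ^ 2 ≤ 1 := Real.sin_sq_le_one θ
  nlinarith

lemma cont_g {k : ℝ} (hk0 : 0 ≤ k) (hk1 : k < 1) :
    Continuous (fun θ => Real.sqrt (1 - k^2 * Real.sin θ ^ 2)
      + 1 / Real.sqrt (1 - k^2 * Real.sin θ ^ 2)) := by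
  have hc : Continuous (fun θ => Real.sqrt (1 - k^2 * Real.sin θ ^ 2)) :=
    (continuous_const.sub ((continuous_const.mul ((Real.continuous_sin.pow 2)))) ).sqrt
  exact hc.add (continuous_const.div hc (fun θ =>
    (Real.sqrt_pos.2 (pos_denom hk0 hk1)).ne'))

theorem EK_sum_strictMonoOn : StrictMonoOn (fun k => E k + K k) (Set.Ioo (0:ℝ) 1) := by
  intro a ha b hb hab
  obtain ⟨ha0, ha1⟩ := ha
  obtain ⟨hb0, hb1⟩ := hb
  have hca := cont_g ha0.le ha1
  have hcb := cont_g hb0.le hb1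
  have hpi : (0:ℝ) < Real.pi / 2 := by positivity
  have hsum : ∀ k : ℝ, 0 ≤ k → k < 1 → E k + K k
      = ∫ θ in (0:ℝ)..(Real.pi/2), (Real.sqrt (1 - k^2 * Real.sin θ ^ 2)
        + 1 / Real.sqrt (1 - k^2 * Real.sin θ ^ 2)) := by
    intro k hk0 hk1
    rw [E, K, ← intervalIntegral.integral_add]
    · exact ((Real.continuous_sqrt.comp
        (continuous_const.sub (continuous_const.mul (Real.continuous_sin.pow 2)))).intervalIntegrable 0 _)
    · exact ((continuous_const.div
        (continuous_const.sub (continuous_const.mul (Real.continuous_sin.pow 2))).sqrt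
        (fun θ => (Real.sqrt_pos.2 (pos_denom hk0 hk1)).ne')).intervalIntegrable 0 _)
  show E a + K a < E b + K b
  rw [hsum a ha0.le ha1, hsum b hb0.le hb1]
  have key : ∀ θ ∈ Set.Ioc (0:ℝ) (Real.pi/2),
      Real.sqrt (1 - a^2 * Real.sin θ ^ 2) + 1 / Real.sqrt (1 - a^2 * Real.sin θ ^ 2)
      < Real.sqrt (1 - b^2 * Real.sin θ ^ 2) + 1 / Real.sqrt (1 - b^2 * Real.sin θ ^ 2) := by
    intro θ hθ
    have hs : 0 < Real.sin θ := Real.sin_pos_of_pos_of_lt_pi hθ.1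
      (lt_of_le_of_lt hθ.2 (by linarith [Real.pi_pos]))
    have hs2 : 0 < Real.sin θ ^ 2 := by positivity
    have hbp : 0 < 1 - b^2 * Real.sin θ ^ 2 := pos_denom hb0.le hb1
    have hab2 : a^2 < b^2 := by nlinarith
    have hlt : 1 - b^2 * Real.sin θ ^ 2 < 1 - a^2 * Real.sin θ ^ 2 := by nlinarith [mul_lt_mul_of_pos_right hab2 hs2]
    have hy : 0 < Real.sqrt (1 - b^2 * Real.sin θ ^ 2) := Real.sqrt_pos.2 hbp
    have hxy : Real.sqrt (1 - b^2 * Real.sin θ ^ 2)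
        < Real.sqrt (1 - a^2 * Real.sin θ ^ 2) := Real.sqrt_lt_sqrt hbp.le hlt
    have hx1 : Real.sqrt (1 - a^2 * Real.sin θ ^ 2) ≤ 1 := by
      have : Real.sqrt (1 - a^2 * Real.sin θ ^ 2) ≤ Real.sqrt 1 :=
        Real.sqrt_le_sqrt (by nlinarith)
      simpa using this
    exact aux_xinv hy hxy hx1
  apply intervalIntegral.integral_lt_integral_of_continuousOn_of_le_of_exists_lt hpi
    hca.continuousOn hcb.continuousOn (fun x hx => (key x hx).le)
  exact ⟨Real.pi/2, ⟨hpi.le, le_refl _⟩, key _ ⟨hpi, le_refl _⟩⟩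
end

section
/- The map k ↦ E(k)·K(k) is strictly increasing on (0,1). -/
/-! With `g θ = √(1 - k² sin² θ)` we have `E k = ∫ g` and `K k = ∫ 1 / g`, so symmetrising the
product of the two integrals gives `2 E(k) K(k) = ∫∫ (g θ / g φ + g φ / g θ) dθ dφ`.
The integrand is `r + 1 / r` with `r² = (1 - k² sin² θ) / (1 - k² sin² φ)`, and `r` moves away
from `1` as `k` grows, so the integrand is nondecreasing in `k`, strictly when
`sin² θ ≠ sin² φ` (e.g. at `θ = 0`, `φ = π / 2`). -/

open Real Set intervalIntegral

open MeasureTheory (volume)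

section IntegralProduct

variable {g : ℝ → ℝ} {a b : ℝ}

theorem integral_div_add_div_eq (hg : IntervalIntegrable g volume a b)
    (hg' : IntervalIntegrable (fun y => 1 / g y) volume a b) (c : ℝ) :
    ∫ y in a..b, (c / g y + g y / c) = c * (∫ y in a..b, 1 / g y) + (∫ y in a..b, g y) / c := by
  simp_rw [div_eq_mul_one_div c]
  rw [integral_add (hg'.const_mul c) (hg.div_const c), integral_const_mul, integral_div]

theorem integral_mul_add_div_eq (hg : IntervalIntegrable g volume a b)
    (hg' : IntervalIntegrable (fun y => 1 / g y) volume a b) :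
    ∫ x in a..b, (g x * (∫ y in a..b, 1 / g y) + (∫ y in a..b, g y) / g x) =
      2 * ((∫ x in a..b, g x) * ∫ x in a..b, 1 / g x) := by
  simp_rw [div_eq_mul_one_div (∫ y in a..b, g y)]
  rw [integral_add (hg.mul_const _) (hg'.const_mul _), integral_mul_const, integral_const_mul]
  ring

end IntegralProduct

theorem integral_mul_integral_one_div_lt {g₁ g₂ : ℝ → ℝ} {a b : ℝ} (hab : a < b)
    (hg₁ : ContinuousOn g₁ (Icc a b)) (hg₂ : ContinuousOn g₂ (Icc a b))
    (hg₁_ne : ∀ x ∈ Icc a b, g₁ x ≠ 0) (hg₂_ne : ∀ x ∈ Icc a b, g₂ x ≠ 0)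
    (hle : ∀ x ∈ Icc a b, ∀ y ∈ Icc a b, g₁ x / g₁ y + g₁ y / g₁ x ≤ g₂ x / g₂ y + g₂ y / g₂ x)
    (hlt : ∃ x ∈ Icc a b, ∃ y ∈ Icc a b,
      g₁ x / g₁ y + g₁ y / g₁ x < g₂ x / g₂ y + g₂ y / g₂ x) :
    (∫ x in a..b, g₁ x) * (∫ x in a..b, 1 / g₁ x) <
      (∫ x in a..b, g₂ x) * ∫ x in a..b, 1 / g₂ x := by
  have hint {g : ℝ → ℝ} (hg : ContinuousOn g (Icc a b)) :
      IntervalIntegrable g volume a b := hg.intervalIntegrable_of_Icc hab.le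
  have hinner {g : ℝ → ℝ} (hg : ContinuousOn g (Icc a b)) (hg₀ : ∀ x ∈ Icc a b, g x ≠ 0)
      (x : ℝ) : ContinuousOn (fun y => g x / g y + g y / g x) (Icc a b) :=
    (continuousOn_const.div hg hg₀).add (hg.div_const _)
  have houter {g : ℝ → ℝ} (hg : ContinuousOn g (Icc a b)) (hg₀ : ∀ x ∈ Icc a b, g x ≠ 0) :
      ContinuousOn (fun x => g x * (∫ y in a..b, 1 / g y) + (∫ y in a..b, g y) / g x) (Icc a b) :=
    (hg.mul continuousOn_const).add (continuousOn_const.div hg hg₀)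
  have hsplit {g : ℝ → ℝ} (hg : ContinuousOn g (Icc a b)) (hg₀ : ∀ x ∈ Icc a b, g x ≠ 0)
      (x : ℝ) :=
    integral_div_add_div_eq (hint hg) (hint (continuousOn_const.div hg hg₀)) (g x)
  rw [← mul_lt_mul_iff_right₀ two_pos,
    ← integral_mul_add_div_eq (hint hg₁) (hint (continuousOn_const.div hg₁ hg₁_ne)),
    ← integral_mul_add_div_eq (hint hg₂) (hint (continuousOn_const.div hg₂ hg₂_ne))]
  refine integral_lt_integral_of_continuousOn_of_le_of_exists_lt hab
    (houter hg₁ hg₁_ne) (houter hg₂ hg₂_ne) (fun x hx => ?_) ?_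
  · rw [← hsplit hg₁ hg₁_ne, ← hsplit hg₂ hg₂_ne]
    exact integral_mono_on hab.le (hint (hinner hg₁ hg₁_ne x)) (hint (hinner hg₂ hg₂_ne x))
      (hle x (Ioc_subset_Icc_self hx))
  · obtain ⟨x, hx, y, hy, hxy⟩ := hlt
    refine ⟨x, hx, ?_⟩
    rw [← hsplit hg₁ hg₁_ne, ← hsplit hg₂ hg₂_ne]
    exact integral_lt_integral_of_continuousOn_of_le_of_exists_lt hab
      (hinner hg₁ hg₁_ne x) (hinner hg₂ hg₂_ne x)
      (fun y hy => hle x hx y (Ioc_subset_Icc_self hy)) ⟨y, hy, hxy⟩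

theorem sqrt_div_add_sqrt_div_lt {x₁ y₁ x₂ y₂ : ℝ} (hx₁ : 0 < x₁) (hy₁ : 0 < y₁) (hx₂ : 0 < x₂)
    (hy₂ : 0 < y₂) (h : x₁ / y₁ + y₁ / x₁ < x₂ / y₂ + y₂ / x₂) :
    √x₁ / √y₁ + √y₁ / √x₁ < √x₂ / √y₂ + √y₂ / √x₂ := by
  have hsq {x y : ℝ} (hx : 0 < x) (hy : 0 < y) : (√x / √y + √y / √x) ^ 2 = x / y + y / x + 2 := by
    have hx' := sqrt_pos.2 hx
    have hy' := sqrt_pos.2 hy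
    field_simp
    rw [sq_sqrt hx.le, sq_sqrt hy.le]
    ring
  refine lt_of_pow_lt_pow_left₀ 2 (by positivity) ?_
  rw [hsq hx₁ hy₁, hsq hx₂ hy₂]
  linarith

theorem one_sub_mul_pos {u s : ℝ} (hu₀ : 0 ≤ u) (hu : u < 1) (hs : s ∈ Icc (0 : ℝ) 1) :
    0 < 1 - u * s :=
  sub_pos.2 (mul_lt_one_of_nonneg_of_lt_one_left hu₀ hu hs.2)

theorem one_sub_mul_div_add_lt {u₁ u₂ s t : ℝ} (hu₁ : 0 ≤ u₁) (hu : u₁ < u₂) (hu₂ : u₂ < 1)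
    (hs : s ∈ Icc (0 : ℝ) 1) (ht : t ∈ Icc (0 : ℝ) 1) (hst : s ≠ t) :
    (1 - u₁ * s) / (1 - u₁ * t) + (1 - u₁ * t) / (1 - u₁ * s) <
      (1 - u₂ * s) / (1 - u₂ * t) + (1 - u₂ * t) / (1 - u₂ * s) := by
  have h₁s := one_sub_mul_pos hu₁ (hu.trans hu₂) hs
  have h₁t := one_sub_mul_pos hu₁ (hu.trans hu₂) ht
  have h₂s := one_sub_mul_pos (hu₁.trans hu.le) hu₂ hs
  have h₂t := one_sub_mul_pos (hu₁.trans hu.le) hu₂ ht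
  rw [div_add_div _ _ h₁t.ne' h₁s.ne', div_add_div _ _ h₂t.ne' h₂s.ne',
    div_lt_div_iff₀ (by positivity) (by positivity)]
  have hpos : 0 < (u₂ - u₁) * (s - t) ^ 2 * (u₁ + u₂ - u₁ * u₂ * (s + t)) := by
    have := sq_pos_of_ne_zero (sub_ne_zero.2 hst)
    have : 0 < u₁ + u₂ - u₁ * u₂ * (s + t) := by nlinarith [hs.2, ht.2]
    positivity
  -- after cross-multiplying, the difference of the two sides factors as in `hpos`
  linear_combination hpos

theorem sqrt_one_sub_mul_div_add_lt {u₁ u₂ s t : ℝ} (hu₁ : 0 ≤ u₁) (hu : u₁ < u₂) (hu₂ : u₂ < 1)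
    (hs : s ∈ Icc (0 : ℝ) 1) (ht : t ∈ Icc (0 : ℝ) 1) (hst : s ≠ t) :
    √(1 - u₁ * s) / √(1 - u₁ * t) + √(1 - u₁ * t) / √(1 - u₁ * s) <
      √(1 - u₂ * s) / √(1 - u₂ * t) + √(1 - u₂ * t) / √(1 - u₂ * s) :=
  sqrt_div_add_sqrt_div_lt (one_sub_mul_pos hu₁ (hu.trans hu₂) hs)
    (one_sub_mul_pos hu₁ (hu.trans hu₂) ht) (one_sub_mul_pos (hu₁.trans hu.le) hu₂ hs)
    (one_sub_mul_pos (hu₁.trans hu.le) hu₂ ht) (one_sub_mul_div_add_lt hu₁ hu hu₂ hs ht hst)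

theorem sqrt_one_sub_mul_div_add_le {u₁ u₂ s t : ℝ} (hu₁ : 0 ≤ u₁) (hu : u₁ < u₂) (hu₂ : u₂ < 1)
    (hs : s ∈ Icc (0 : ℝ) 1) (ht : t ∈ Icc (0 : ℝ) 1) :
    √(1 - u₁ * s) / √(1 - u₁ * t) + √(1 - u₁ * t) / √(1 - u₁ * s) ≤
      √(1 - u₂ * s) / √(1 - u₂ * t) + √(1 - u₂ * t) / √(1 - u₂ * s) := by
  rcases eq_or_ne s t with rfl | hst
  · rw [div_self (sqrt_pos.2 (one_sub_mul_pos hu₁ (hu.trans hu₂) hs)).ne',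
      div_self (sqrt_pos.2 (one_sub_mul_pos (hu₁.trans hu.le) hu₂ hs)).ne']
  · exact (sqrt_one_sub_mul_div_add_lt hu₁ hu hu₂ hs ht hst).le

theorem EK_mul_strictMonoOn : StrictMonoOn (fun k => E k * K k) (Set.Ioo (0:ℝ) 1) := by
  intro k₁ hk₁ k₂ hk₂ hk
  have hu₁ : 0 ≤ k₁ ^ 2 := sq_nonneg k₁
  have hu : k₁ ^ 2 < k₂ ^ 2 := pow_lt_pow_left₀ hk hk₁.1.le two_ne_zero
  have hu₂ : k₂ ^ 2 < 1 := pow_lt_one₀ hk₂.1.le hk₂.2 two_ne_zero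
  have hsin (θ : ℝ) : sin θ ^ 2 ∈ Icc (0 : ℝ) 1 := ⟨sq_nonneg _, sin_sq_le_one θ⟩
  have hcont (k : ℝ) : ContinuousOn (fun θ => √(1 - k ^ 2 * sin θ ^ 2)) (Icc 0 (π / 2)) := by
    fun_prop
  exact integral_mul_integral_one_div_lt (by positivity) (hcont k₁) (hcont k₂)
    (fun θ _ => (sqrt_pos.2 (one_sub_mul_pos hu₁ (hu.trans hu₂) (hsin θ))).ne')
    (fun θ _ => (sqrt_pos.2 (one_sub_mul_pos (hu₁.trans hu.le) hu₂ (hsin θ))).ne')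
    (fun θ _ φ _ => sqrt_one_sub_mul_div_add_le hu₁ hu hu₂ (hsin θ) (hsin φ))
    ⟨0, ⟨le_rfl, by positivity⟩, π / 2, ⟨by positivity, le_rfl⟩,
      sqrt_one_sub_mul_div_add_lt hu₁ hu hu₂ (hsin 0) (hsin (π / 2)) (by simp)⟩
end

section
/- For each fixed ω > 0, the dnoidal wavelength function T_dn(β₁) := (2√(2ω)/β₁)·K(κ(β₁)), with κ(β₁) = √(2(β₁²-1))/β₁, is strictly increasing on (1, √2). -/
open Real Set intervalIntegral

/-- The symmetrized integrand `ψ u = 1/√(1+u) + 1/√(1-u)`. -/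
noncomputable def psi (u : ℝ) : ℝ := (Real.sqrt (1+u))⁻¹ + (Real.sqrt (1-u))⁻¹

lemma psi_strictMonoOn : StrictMonoOn psi (Set.Ico (0:ℝ) 1) := by
  apply strictMonoOn_of_deriv_pos (convex_Ico 0 1)
  · apply ContinuousOn.add
    · apply ContinuousOn.inv₀
      · exact (Real.continuous_sqrt.comp (continuous_const.add continuous_id)).continuousOn
      · intro u hu
        have : (0:ℝ) < 1 + u := by have := hu.1; linarith
        exact (Real.sqrt_pos.2 this).ne'
    · apply ContinuousOn.inv₀
      · exact (Real.continuous_sqrt.comp (continuous_const.sub continuous_id)).continuousOn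
      · intro u hu
        have : (0:ℝ) < 1 - u := by have := hu.2; linarith
        exact (Real.sqrt_pos.2 this).ne'
  · intro u hu
    rw [interior_Ico] at hu
    obtain ⟨hu0, hu1⟩ := hu
    have h1p : (0:ℝ) < 1 + u := by linarith
    have h1m : (0:ℝ) < 1 - u := by linarith
    have hA : 0 < Real.sqrt (1+u) := Real.sqrt_pos.2 h1p
    have hB : 0 < Real.sqrt (1-u) := Real.sqrt_pos.2 h1m
    have hBA : Real.sqrt (1-u) < Real.sqrt (1+u) :=
      Real.sqrt_lt_sqrt h1m.le (by linarith)
    have hs1 : HasDerivAt (fun u : ℝ => Real.sqrt (1+u)) (1/(2*Real.sqrt (1+u))) u := by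
      have h1 : HasDerivAt (fun u : ℝ => 1 + u) 1 u := by
        simpa using (hasDerivAt_id u).const_add 1
      exact h1.sqrt h1p.ne'
    have hs2 : HasDerivAt (fun u : ℝ => Real.sqrt (1-u)) ((-1)/(2*Real.sqrt (1-u))) u := by
      have h2 : HasDerivAt (fun u : ℝ => 1 - u) (-1) u := (hasDerivAt_id u).const_sub 1
      exact h2.sqrt h1m.ne'
    have hi1 : HasDerivAt (fun u : ℝ => (Real.sqrt (1+u))⁻¹)
        (-(1/(2*Real.sqrt (1+u))) / (Real.sqrt (1+u))^2) u := hs1.inv hA.ne'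
    have hi2 : HasDerivAt (fun u : ℝ => (Real.sqrt (1-u))⁻¹)
        (-((-1)/(2*Real.sqrt (1-u))) / (Real.sqrt (1-u))^2) u := hs2.inv hB.ne'
    have hψ : HasDerivAt psi
        (-(1/(2*Real.sqrt (1+u))) / (Real.sqrt (1+u))^2
          + -((-1)/(2*Real.sqrt (1-u))) / (Real.sqrt (1-u))^2) u := hi1.add hi2
    rw [hψ.deriv]
    have e1 : -(1/(2*Real.sqrt (1+u))) / (Real.sqrt (1+u))^2
        = -(1/(2*(Real.sqrt (1+u))^3)) := by
      have hA2 : Real.sqrt (1+u)^2 = 1+u := Real.sq_sqrt h1p.le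
      field_simp
    have e2 : -((-1)/(2*Real.sqrt (1-u))) / (Real.sqrt (1-u))^2
        = 1/(2*(Real.sqrt (1-u))^3) := by
      have hB2 : Real.sqrt (1-u)^2 = 1-u := Real.sq_sqrt h1m.le
      field_simp
    rw [e1, e2]
    have hlt : 1/(2*(Real.sqrt (1+u))^3) < 1/(2*(Real.sqrt (1-u))^3) := by
      apply one_div_lt_one_div_of_lt
      · positivity
      · have := pow_lt_pow_left₀ hBA hB.le (n := 3) (by norm_num)
        linarith
    linarith

lemma cont_inv_sqrt {f : ℝ → ℝ} (hf : Continuous f) (h : ∀ x, 0 < f x) :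
    Continuous fun x => 1 / Real.sqrt (f x) :=
  continuous_const.div (Real.continuous_sqrt.comp hf)
    (fun x => (Real.sqrt_pos.2 (h x)).ne')

lemma beta_facts {β : ℝ} (hβ : β ∈ Set.Ioo (1:ℝ) (Real.sqrt 2)) :
    0 < β ∧ 1 < β^2 ∧ β^2 < 2 := by
  obtain ⟨h1, h2⟩ := hβ
  have h0 : 0 < β := by linarith
  have hs : Real.sqrt 2 * Real.sqrt 2 = 2 := Real.mul_self_sqrt (by norm_num)
  refine ⟨h0, by nlinarith, by nlinarith⟩

lemma pos_plus {β : ℝ} (hβ : β ∈ Set.Ioo (1:ℝ) (Real.sqrt 2)) (θ : ℝ) :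
    0 < 1 + (β^2-1) * Real.cos (2*θ) := by
  obtain ⟨_, h1, h2⟩ := beta_facts hβ
  have hc1 := Real.neg_one_le_cos (2*θ)
  have hc2 := Real.cos_le_one (2*θ)
  nlinarith

lemma pos_minus {β : ℝ} (hβ : β ∈ Set.Ioo (1:ℝ) (Real.sqrt 2)) (θ : ℝ) :
    0 < 1 - (β^2-1) * Real.cos (2*θ) := by
  obtain ⟨_, h1, h2⟩ := beta_facts hβ
  have hc1 := Real.neg_one_le_cos (2*θ)
  have hc2 := Real.cos_le_one (2*θ)
  nlinarith

/-- `K(κ(β))/β` as a folded integral over `[0, π/4]`. -/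
lemma K_eq_folded {β : ℝ} (hβ : β ∈ Set.Ioo (1:ℝ) (Real.sqrt 2)) :
    K (Real.sqrt (2*(β^2-1)) / β) / β
      = ∫ θ in (0:ℝ)..(Real.pi/4),
          (1 / Real.sqrt (1 + (β^2-1) * Real.cos (2*θ))
            + 1 / Real.sqrt (1 - (β^2-1) * Real.cos (2*θ))) := by
  obtain ⟨h0, h1, h2⟩ := beta_facts hβ
  have hcos2 : Continuous fun θ : ℝ => Real.cos (2*θ) :=
    Real.continuous_cos.comp (continuous_const.mul continuous_id)
  have hcplus : Continuous fun θ => 1 / Real.sqrt (1 + (β^2-1) * Real.cos (2*θ)) :=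
    cont_inv_sqrt (continuous_const.add (continuous_const.mul hcos2)) (pos_plus hβ)
  have hcminus : Continuous fun θ => 1 / Real.sqrt (1 - (β^2-1) * Real.cos (2*θ)) :=
    cont_inv_sqrt (continuous_const.sub (continuous_const.mul hcos2)) (pos_minus hβ)
  have step1 : K (Real.sqrt (2*(β^2-1)) / β) / β
      = ∫ θ in (0:ℝ)..(Real.pi/2), 1 / Real.sqrt (1 + (β^2-1) * Real.cos (2*θ)) := by
    rw [K, div_eq_mul_inv, mul_comm, ← intervalIntegral.integral_const_mul]
    apply intervalIntegral.integral_congr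
    intro θ _
    dsimp only
    have hk2 : (Real.sqrt (2*(β^2-1)) / β)^2 = 2*(β^2-1)/β^2 := by
      rw [div_pow, Real.sq_sqrt (by nlinarith : (0:ℝ) ≤ 2*(β^2-1))]
    have hD : 1 - (Real.sqrt (2*(β^2-1)) / β)^2 * Real.sin θ ^ 2
        = (1 + (β^2-1) * Real.cos (2*θ)) / β^2 := by
      rw [hk2]
      have hcos : Real.cos (2*θ) = 2 * Real.cos θ ^ 2 - 1 := Real.cos_two_mul θ
      have hsc : Real.sin θ ^ 2 + Real.cos θ ^ 2 = 1 := Real.sin_sq_add_cos_sq θ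
      field_simp
      nlinarith [hsc]
    have hDpos : 0 < 1 + (β^2-1) * Real.cos (2*θ) := pos_plus hβ θ
    have hsq : Real.sqrt ((1 + (β^2-1) * Real.cos (2*θ)) / β^2)
        = Real.sqrt (1 + (β^2-1) * Real.cos (2*θ)) / β := by
      rw [div_eq_mul_inv, Real.sqrt_mul hDpos.le, Real.sqrt_inv, Real.sqrt_sq h0.le,
        ← div_eq_mul_inv]
    rw [hD, hsq]
    have hsD : 0 < Real.sqrt (1 + (β^2-1) * Real.cos (2*θ)) := Real.sqrt_pos.2 hDpos
    field_simp
  have step2 : (∫ θ in (0:ℝ)..(Real.pi/2), 1 / Real.sqrt (1 + (β^2-1) * Real.cos (2*θ)))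
      = (∫ θ in (0:ℝ)..(Real.pi/4), 1 / Real.sqrt (1 + (β^2-1) * Real.cos (2*θ)))
        + ∫ θ in (Real.pi/4)..(Real.pi/2), 1 / Real.sqrt (1 + (β^2-1) * Real.cos (2*θ)) :=
    (intervalIntegral.integral_add_adjacent_intervals
      (hcplus.intervalIntegrable _ _) (hcplus.intervalIntegrable _ _)).symm
  have step3 : (∫ θ in (Real.pi/4)..(Real.pi/2), 1 / Real.sqrt (1 + (β^2-1) * Real.cos (2*θ)))
      = ∫ θ in (0:ℝ)..(Real.pi/4), 1 / Real.sqrt (1 - (β^2-1) * Real.cos (2*θ)) := by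
    have := intervalIntegral.integral_comp_sub_left
      (a := 0) (b := Real.pi/4)
      (fun θ => 1 / Real.sqrt (1 + (β^2-1) * Real.cos (2*θ))) (Real.pi/2)
    rw [sub_zero] at this
    have harg : Real.pi/2 - Real.pi/4 = Real.pi/4 := by ring
    rw [harg] at this
    rw [← this]
    apply intervalIntegral.integral_congr
    intro θ _
    dsimp only
    have : Real.cos (2*(Real.pi/2 - θ)) = - Real.cos (2*θ) := by
      have : 2*(Real.pi/2 - θ) = Real.pi - 2*θ := by ring
      rw [this, Real.cos_pi_sub]
    rw [this]
    ring_nf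
  rw [step1, step2, step3,
    ← intervalIntegral.integral_add (hcplus.intervalIntegrable _ _)
      (hcminus.intervalIntegrable _ _)]

theorem T_dn_strictMonoOn (ω : ℝ) (hω : 0 < ω) :
    StrictMonoOn (fun β₁ => (2 * Real.sqrt (2 * ω) / β₁) *
        K (Real.sqrt (2 * (β₁^2 - 1)) / β₁)) (Set.Ioo (1:ℝ) (Real.sqrt 2)) := by
  intro β hβ β' hβ' hltβ
  obtain ⟨h0, h1, h2⟩ := beta_facts hβ
  obtain ⟨h0', h1', h2'⟩ := beta_facts hβ'
  have hC : 0 < 2 * Real.sqrt (2*ω) := by positivity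
  have hcos2 : Continuous fun θ : ℝ => Real.cos (2*θ) :=
    Real.continuous_cos.comp (continuous_const.mul continuous_id)
  have hval : ∀ γ : ℝ, γ ≠ 0 → (2 * Real.sqrt (2*ω) / γ) * K (Real.sqrt (2*(γ^2-1))/γ)
      = 2 * Real.sqrt (2*ω) * (K (Real.sqrt (2*(γ^2-1))/γ) / γ) := by
    intro γ hγ; rw [div_mul_eq_mul_div, mul_div_assoc]
  dsimp only
  rw [hval β h0.ne', hval β' h0'.ne', K_eq_folded hβ, K_eq_folded hβ']
  apply mul_lt_mul_of_pos_left _ hC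
  have hcp : Continuous fun θ => 1 / Real.sqrt (1 + (β^2-1) * Real.cos (2*θ)) :=
    cont_inv_sqrt (continuous_const.add (continuous_const.mul hcos2)) (pos_plus hβ)
  have hcm : Continuous fun θ => 1 / Real.sqrt (1 - (β^2-1) * Real.cos (2*θ)) :=
    cont_inv_sqrt (continuous_const.sub (continuous_const.mul hcos2)) (pos_minus hβ)
  have hcp' : Continuous fun θ => 1 / Real.sqrt (1 + (β'^2-1) * Real.cos (2*θ)) :=
    cont_inv_sqrt (continuous_const.add (continuous_const.mul hcos2)) (pos_plus hβ')
  have hcm' : Continuous fun θ => 1 / Real.sqrt (1 - (β'^2-1) * Real.cos (2*θ)) :=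
    cont_inv_sqrt (continuous_const.sub (continuous_const.mul hcos2)) (pos_minus hβ')
  have hsqlt : β^2 - 1 < β'^2 - 1 := by nlinarith
  apply intervalIntegral.integral_lt_integral_of_continuousOn_of_le_of_exists_lt
  · have := Real.pi_pos; linarith
  · exact (hcp.add hcm).continuousOn
  · exact (hcp'.add hcm').continuousOn
  · intro θ hθ
    have hθ1 : 0 < θ := hθ.1
    have hθ2 : θ ≤ Real.pi/4 := hθ.2
    have hc0 : 0 ≤ Real.cos (2*θ) := by
      exact Real.cos_nonneg_of_mem_Icc (Set.mem_Icc.2 ⟨by linarith, by linarith⟩)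
    have hc1 : Real.cos (2*θ) ≤ 1 := Real.cos_le_one _
    have hu : (β^2-1) * Real.cos (2*θ) ∈ Set.Ico (0:ℝ) 1 := by
      constructor
      · exact mul_nonneg (by linarith) hc0
      · nlinarith
    have hu' : (β'^2-1) * Real.cos (2*θ) ∈ Set.Ico (0:ℝ) 1 := by
      constructor
      · exact mul_nonneg (by linarith) hc0
      · nlinarith
    have huu' : (β^2-1) * Real.cos (2*θ) ≤ (β'^2-1) * Real.cos (2*θ) :=
      mul_le_mul_of_nonneg_right hsqlt.le hc0
    have := psi_strictMonoOn.monotoneOn hu hu' huu'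
    simpa [psi, one_div] using this
  · refine ⟨0, ⟨le_refl 0, by positivity⟩, ?_⟩
    have hu : (β^2-1) ∈ Set.Ico (0:ℝ) 1 := ⟨by linarith, by linarith⟩
    have hu' : (β'^2-1) ∈ Set.Ico (0:ℝ) 1 := ⟨by linarith, by linarith⟩
    have := psi_strictMonoOn hu hu' hsqlt
    simpa [psi, one_div] using this
end

section
/- For each fixed ω > 0, the cnoidal wavelength function T_cn(β₂) := 4√ω · K(κ(β₂)) / √(β₂²-1), with κ(β₂) = β₂/√(2β₂²-2), is strictly decreasing on (√2, +∞). -/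
open Real Set intervalIntegral

lemma denom_pos' {k : ℝ} (hk : k ^ 2 < 1) (θ : ℝ) :
    0 < 1 - k ^ 2 * Real.sin θ ^ 2 := by
  nlinarith [Real.sin_sq_le_one θ, sq_nonneg k, sq_nonneg (Real.sin θ)]

lemma K_cont_integrand {k : ℝ} (hk : k ^ 2 < 1) :
    Continuous fun θ : ℝ => 1 / Real.sqrt (1 - k ^ 2 * Real.sin θ ^ 2) := by
  apply Continuous.div continuous_const
  · exact (continuous_const.sub (continuous_const.mul (Real.continuous_sin.pow 2))).sqrt
  · intro θ
    exact (Real.sqrt_pos.mpr (denom_pos' hk θ)).ne'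

lemma K_pos' {k : ℝ} (hk : k ^ 2 < 1) : 0 < K k := by
  apply intervalIntegral.intervalIntegral_pos_of_pos_on
    ((K_cont_integrand hk).intervalIntegrable _ _)
  · intro θ _
    exact one_div_pos.mpr (Real.sqrt_pos.mpr (denom_pos' hk θ))
  · positivity

lemma K_mono' {k₁ k₂ : ℝ} (h1 : 0 ≤ k₁) (h12 : k₁ ≤ k₂) (h2 : k₂ ^ 2 < 1) :
    K k₁ ≤ K k₂ := by
  have h1sq : k₁ ^ 2 ≤ k₂ ^ 2 := by nlinarith
  have hk1 : k₁ ^ 2 < 1 := lt_of_le_of_lt h1sq h2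
  apply intervalIntegral.integral_mono_on (by positivity)
    ((K_cont_integrand hk1).intervalIntegrable _ _)
    ((K_cont_integrand h2).intervalIntegrable _ _)
  intro θ _
  apply one_div_le_one_div_of_le
  · exact Real.sqrt_pos.mpr (denom_pos' h2 θ)
  · apply Real.sqrt_le_sqrt
    nlinarith [sq_nonneg (Real.sin θ)]

theorem T_cn_strictAntiOn (ω : ℝ) (hω : 0 < ω) :
    StrictAntiOn (fun β₂ => 4 * Real.sqrt ω * K (β₂ / Real.sqrt (2 * β₂^2 - 2)) /
        Real.sqrt (β₂^2 - 1)) (Set.Ioi (Real.sqrt 2)) := by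
  intro a ha b hb hab
  simp only [Set.mem_Ioi] at ha hb
  have h2 : (0:ℝ) < Real.sqrt 2 := by positivity
  have ha0 : 0 < a := h2.trans ha
  have hb0 : 0 < b := h2.trans hb
  have ha2 : 2 < a ^ 2 := by
    have := Real.sq_sqrt (by norm_num : (2:ℝ) ≥ 0)
    nlinarith [Real.sqrt_nonneg 2]
  have hb2 : 2 < b ^ 2 := by nlinarith
  have hda : 0 < 2 * a ^ 2 - 2 := by nlinarith
  have hdb : 0 < 2 * b ^ 2 - 2 := by nlinarith
  have hsa : 0 < Real.sqrt (2 * a ^ 2 - 2) := Real.sqrt_pos.mpr hda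
  have hsb : 0 < Real.sqrt (2 * b ^ 2 - 2) := Real.sqrt_pos.mpr hdb
  set ka := a / Real.sqrt (2 * a ^ 2 - 2) with hka
  set kb := b / Real.sqrt (2 * b ^ 2 - 2) with hkb
  have hka1 : ka ^ 2 < 1 := by
    rw [hka, div_pow, Real.sq_sqrt hda.le, div_lt_one hda]
    nlinarith
  have hkb0 : 0 ≤ kb := by positivity
  have hle : kb ≤ ka := by
    rw [hka, hkb, div_le_div_iff₀ hsb hsa]
    rw [← Real.sqrt_sq hb0.le, ← Real.sqrt_sq ha0.le,
      ← Real.sqrt_mul (sq_nonneg b), ← Real.sqrt_mul (sq_nonneg a)]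
    apply Real.sqrt_le_sqrt
    nlinarith [Real.sq_sqrt (sq_nonneg a), Real.sq_sqrt (sq_nonneg b)]
  have hKle : K kb ≤ K ka := K_mono' hkb0 hle hka1
  have hKb : 0 < K kb := K_pos' (lt_of_le_of_lt (by nlinarith : kb ^ 2 ≤ ka ^ 2) hka1)
  have hDa : 0 < Real.sqrt (a ^ 2 - 1) := Real.sqrt_pos.mpr (by nlinarith)
  have hDab : Real.sqrt (a ^ 2 - 1) < Real.sqrt (b ^ 2 - 1) :=
    Real.sqrt_lt_sqrt (by nlinarith) (by nlinarith)
  have hω' : 0 < 4 * Real.sqrt ω := by positivity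
  simp only
  rw [div_lt_div_iff₀ (hDa.trans hDab) hDa]
  have h1 : 0 < 4 * Real.sqrt ω * K kb := by positivity
  nlinarith [mul_le_mul_of_nonneg_right hKle hω'.le]
end

section
/- Let c ∈ ℝ, ω_c = 1+c², β₁ ∈ (√(ω_c), √(2ω_c)), β₂ = √(2ω_c - β₁²), ℓ = β₁/√2, κ = β₂/β₁, and ψ(x) = β₂·sn(ℓx; κ). Then ψ solves ψ'' + (1+c²)ψ - ψ³ = 0; consequently u(t,x) = e^{ict}ψ(x) solves the complex φ⁴ equation ∂ₜ²u - ∂ₓ²u = u - |u|²u. -/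
set_option maxHeartbeats 1000000 in
theorem complex_standing_snoidal_solves_phi4
    (c ω β₁ β₂ ℓ κ : ℝ) (sn : ℝ → ℝ)
    (hω : ω = 1 + c^2)
    (hβ₁ : β₁ ∈ Set.Ioo (Real.sqrt ω) (Real.sqrt (2 * ω)))
    (hβ₂ : β₂ = Real.sqrt (2 * ω - β₁^2))
    (hℓ : ℓ = β₁ / Real.sqrt 2) (hκ : κ = β₂ / β₁)
    (hsn_smooth : ContDiff ℝ (⊤ : ℕ∞) sn) (hsn0 : sn 0 = 0) (hsn'0 : deriv sn 0 = 1)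
    (hsn_ode : ∀ x, (deriv sn x)^2 = (1 - (sn x)^2) * (1 - κ^2 * (sn x)^2)) :
    (∀ x : ℝ, deriv (deriv (fun y => β₂ * sn (ℓ * y))) x
        + (1 + c^2) * (β₂ * sn (ℓ * x)) - (β₂ * sn (ℓ * x))^3 = 0) ∧
    (∀ t x : ℝ,
      deriv (deriv (fun s : ℝ =>
          Complex.exp (Complex.I * c * s) * ((β₂ * sn (ℓ * x) : ℝ) : ℂ))) t
      - deriv (deriv (fun y : ℝ =>
          Complex.exp (Complex.I * c * t) * ((β₂ * sn (ℓ * y) : ℝ) : ℂ))) x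
      = Complex.exp (Complex.I * c * t) * ((β₂ * sn (ℓ * x) : ℝ) : ℂ)
        - (‖Complex.exp (Complex.I * c * t)
            * ((β₂ * sn (ℓ * x) : ℝ) : ℂ)‖ : ℂ)^2
          * (Complex.exp (Complex.I * c * t) * ((β₂ * sn (ℓ * x) : ℝ) : ℂ))) := by
  -- basic positivity facts
  obtain ⟨hβ₁l, hβ₁r⟩ := hβ₁
  have hωpos : (0:ℝ) < ω := by nlinarith [sq_nonneg c]
  have hβ₁pos : 0 < β₁ := lt_of_le_of_lt (Real.sqrt_nonneg ω) hβ₁l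
  have hβ₁sq : ω < β₁^2 := (Real.sqrt_lt' hβ₁pos).mp hβ₁l
  have hβ₁sq2 : β₁^2 < 2*ω := (Real.lt_sqrt hβ₁pos.le).mp hβ₁r
  have hβ₂sq : β₂^2 = 2*ω - β₁^2 := by
    rw [hβ₂, Real.sq_sqrt (by linarith)]
  have hβ₂pos : 0 < β₂ := by
    rw [hβ₂]; exact Real.sqrt_pos.mpr (by linarith)
  have hβ₂lt : β₂ < β₁ := by nlinarith
  have hκpos : 0 < κ := by rw [hκ]; positivity
  have hκlt1 : κ < 1 := by rw [hκ]; exact (div_lt_one hβ₁pos).mpr hβ₂lt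
  have hℓsq : ℓ^2 = β₁^2/2 := by
    rw [hℓ, div_pow, Real.sq_sqrt (by norm_num : (0:ℝ) ≤ 2)]
  have hκsq : κ^2 = β₂^2/β₁^2 := by rw [hκ, div_pow]
  have hA : ℓ^2 * (1+κ^2) = 1 + c^2 := by
    rw [hℓsq, hκsq, hβ₂sq]
    field_simp
    nlinarith [hω]
  have hB : 2*ℓ^2*κ^2 = β₂^2 := by
    rw [hℓsq, hκsq]
    field_simp
  -- differentiability of sn and its derivatives
  have hsm : ContDiff ℝ ((⊤ : ℕ∞) : WithTop ℕ∞) sn := hsn_smooth.of_le (mod_cast le_top)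
  have csn1 : ContDiff ℝ ((⊤ : ℕ∞) : WithTop ℕ∞) (deriv sn) :=
    (contDiff_infty_iff_deriv.mp hsm).2
  have dsn : Differentiable ℝ sn := (contDiff_infty_iff_deriv.mp hsm).1
  have dsn1 : Differentiable ℝ (deriv sn) := (contDiff_infty_iff_deriv.mp csn1).1
  have csn2 : Continuous (deriv (deriv sn)) :=
    ((contDiff_infty_iff_deriv.mp csn1).2).continuous
  -- key: sn' * (sn'' + (1+κ²) sn - 2κ² sn³) = 0 everywhere
  set H : ℝ → ℝ := fun x => deriv (deriv sn) x + (1+κ^2) * sn x - 2*κ^2 * (sn x)^3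
    with hHdef
  have key : ∀ x, deriv sn x * H x = 0 := by
    intro x
    have d1 : HasDerivAt sn (deriv sn x) x := (dsn x).hasDerivAt
    have d2 : HasDerivAt (deriv sn) (deriv (deriv sn) x) x := (dsn1 x).hasDerivAt
    have h1 : HasDerivAt (fun y => (deriv sn y)^2)
        (2 * deriv sn x ^ 1 * deriv (deriv sn) x) x := by
      exact (d2.pow 2).congr_deriv (by norm_num)
    have h2 : HasDerivAt (fun y => (1 - (sn y)^2) * (1 - κ^2 * (sn y)^2))
        ((0 - 2 * sn x ^ 1 * deriv sn x) * (1 - κ^2 * (sn x)^2)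
          + (1 - (sn x)^2) * (0 - κ^2 * (2 * sn x ^ 1 * deriv sn x))) x := by
      exact ((hasDerivAt_const x (1:ℝ)).sub (d1.pow 2)).mul
        ((hasDerivAt_const x (1:ℝ)).sub ((d1.pow 2).const_mul (κ^2)))
    have he : (fun y => (deriv sn y)^2)
        = (fun y => (1 - (sn y)^2) * (1 - κ^2 * (sn y)^2)) := funext hsn_ode
    rw [he] at h1
    have heq := h1.unique h2
    simp only [hHdef]
    linear_combination heq / 2
  have hHcont : Continuous H := by
    apply Continuous.sub
    · exact csn2.add (continuous_const.mul (hsn_smooth.continuous))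
    · exact continuous_const.mul ((hsn_smooth.continuous).pow 3)
  -- H vanishes identically
  have hH0 : H 0 = 0 := by
    have := key 0; rw [hsn'0] at this; linarith
  have hHzero : ∀ x, H x = 0 := by
    by_contra hcon
    push_neg at hcon
    obtain ⟨x₀, hx₀⟩ := hcon
    set U : Set ℝ := {x | H x ≠ 0} with hUdef
    have hUopen : IsOpen U := isOpen_compl_iff.mpr (isClosed_eq hHcont continuous_const)
    have hUlb : ∀ x ∈ U, 1 - κ^2 ≤ |H x| := by
      intro x hx
      have hev : ∀ᶠ y in nhds x, deriv sn y = 0 := by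
        filter_upwards [hUopen.mem_nhds hx] with y hy
        rcases mul_eq_zero.mp (key y) with h | h
        · exact h
        · exact absurd h hy
      have hsn'x : deriv sn x = 0 := hev.self_of_nhds
      have hsn''x : deriv (deriv sn) x = 0 := by
        have : deriv (deriv sn) x = deriv (fun _ : ℝ => (0:ℝ)) x :=
          Filter.EventuallyEq.deriv_eq hev
        simpa using this
      have hode := hsn_ode x
      rw [hsn'x] at hode
      have hode' : (1 - (sn x)^2) * (1 - κ^2 * (sn x)^2) = 0 := by
        rw [← hode]; norm_num
      have hHx : H x = (1+κ^2) * sn x - 2*κ^2 * (sn x)^3 := by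
        simp [hHdef, hsn''x]
      rcases mul_eq_zero.mp hode' with h | h
      · have hfac : (sn x - 1) * (sn x + 1) = 0 := by linear_combination -h
        rcases mul_eq_zero.mp hfac with h1 | h1
        · have hs : sn x = 1 := by linarith
          refine le_abs.mpr (Or.inl ?_)
          rw [hHx, hs]; nlinarith
        · have hs : sn x = -1 := by linarith
          refine le_abs.mpr (Or.inr ?_)
          rw [hHx, hs]; nlinarith
      · have hfac : (κ * sn x - 1) * (κ * sn x + 1) = 0 := by linear_combination -h
        rcases mul_eq_zero.mp hfac with h1 | h1
        · have ha : κ * sn x = 1 := by linarith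
          refine le_abs.mpr (Or.inr ?_)
          have hval : κ * (-(H x)) = 1 - κ^2 := by
            rw [hHx]
            linear_combination (2*(κ*sn x)^2 + 2*(κ*sn x) + 2 - (1+κ^2)) * ha
          have h2 : 1 - κ^2 ≤ (1 - κ^2)/κ := by
            rw [le_div_iff₀ hκpos]; nlinarith
          have h3 : -H x = (1-κ^2)/κ := by
            field_simp
            linear_combination hval
          linarith
        · have ha : κ * sn x = -1 := by linarith
          refine le_abs.mpr (Or.inl ?_)
          have hval : κ * H x = 1 - κ^2 := by
            rw [hHx]
            linear_combination ((1+κ^2) - 2*((κ*sn x)^2 - κ*sn x + 1)) * ha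
          have h2 : 1 - κ^2 ≤ (1 - κ^2)/κ := by
            rw [le_div_iff₀ hκpos]; nlinarith
          have h3 : H x = (1-κ^2)/κ := by
            field_simp
            linear_combination hval
          linarith
    have hUclosed : IsClosed U := by
      have : U = {x | 1 - κ^2 ≤ |H x|} := by
        ext x
        constructor
        · exact fun hx => hUlb x hx
        · intro hx
          have : 0 < |H x| := lt_of_lt_of_le (by nlinarith) hx
          exact abs_pos.mp this
      rw [this]
      exact isClosed_le continuous_const hHcont.abs
    have : U = Set.univ := by
      rcases isClopen_iff.mp ⟨hUclosed, hUopen⟩ with h | h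
      · exact absurd (h ▸ hx₀ : x₀ ∈ (∅ : Set ℝ)) (Set.notMem_empty x₀)
      · exact h
    have h0U : (0:ℝ) ∈ U := this ▸ Set.mem_univ 0
    exact h0U hH0
  -- second derivative formula for ψ
  have hψd : ∀ x, HasDerivAt (fun y => β₂ * sn (ℓ * y)) (β₂ * (deriv sn (ℓ*x) * ℓ)) x := by
    intro x
    have dl : HasDerivAt (fun y : ℝ => ℓ * y) ℓ x := by
      simpa using (hasDerivAt_id x).const_mul ℓ
    exact (((dsn (ℓ*x)).hasDerivAt).comp x dl).const_mul β₂
  have hψd1 : deriv (fun y => β₂ * sn (ℓ * y)) = fun x => β₂ * (deriv sn (ℓ*x) * ℓ) :=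
    funext fun x => (hψd x).deriv
  have hψd2 : ∀ x, deriv (deriv (fun y => β₂ * sn (ℓ * y))) x
      = β₂ * (deriv (deriv sn) (ℓ*x) * ℓ * ℓ) := by
    intro x
    rw [hψd1]
    have dl : HasDerivAt (fun y : ℝ => ℓ * y) ℓ x := by
      simpa using (hasDerivAt_id x).const_mul ℓ
    exact ((((dsn1 (ℓ*x)).hasDerivAt.comp x dl).mul_const ℓ).const_mul β₂).deriv
  have part1 : ∀ x : ℝ, deriv (deriv (fun y => β₂ * sn (ℓ * y))) x
      + (1 + c^2) * (β₂ * sn (ℓ * x)) - (β₂ * sn (ℓ * x))^3 = 0 := by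
    intro x
    rw [hψd2 x]
    have hHx := hHzero (ℓ*x)
    simp only [hHdef] at hHx
    have hd : deriv (deriv sn) (ℓ*x) = -((1+κ^2) * sn (ℓ*x)) + 2*κ^2 * (sn (ℓ*x))^3 := by
      linarith
    rw [hd]
    linear_combination (-(β₂ * sn (ℓ*x))) * hA + (β₂ * (sn (ℓ*x))^3) * hB
  refine ⟨part1, ?_⟩
  intro t x
  set ψ : ℝ := β₂ * sn (ℓ * x) with hψdef
  -- time derivative
  have hTd : ∀ s : ℝ, HasDerivAt (fun s : ℝ => Complex.exp (Complex.I * c * s) * (ψ:ℂ))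
      (Complex.exp (Complex.I * c * s) * (Complex.I * c) * (ψ:ℂ)) s := by
    intro s
    have h1 : HasDerivAt (fun s : ℝ => (s:ℂ)) 1 s := by
      simpa using (hasDerivAt_id s).ofReal_comp
    have h2 : HasDerivAt (fun s : ℝ => Complex.I * c * (s:ℂ)) (Complex.I * c) s := by
      simpa using h1.const_mul (Complex.I * c)
    have h3 := h2.cexp
    simpa using h3.mul_const (ψ:ℂ)
  have hT1 : deriv (fun s : ℝ => Complex.exp (Complex.I * c * s) * (ψ:ℂ))
      = fun s : ℝ => Complex.exp (Complex.I * c * s) * (Complex.I * c) * (ψ:ℂ) :=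
    funext fun s => (hTd s).deriv
  have hT2 : deriv (deriv (fun s : ℝ => Complex.exp (Complex.I * c * s) * (ψ:ℂ))) t
      = Complex.exp (Complex.I * c * t) * (Complex.I * c) * (Complex.I * c) * (ψ:ℂ) := by
    rw [hT1]
    have h1 : HasDerivAt (fun s : ℝ => (s:ℂ)) 1 t := by
      simpa using (hasDerivAt_id t).ofReal_comp
    have h2 : HasDerivAt (fun s : ℝ => Complex.I * c * (s:ℂ)) (Complex.I * c) t := by
      simpa using h1.const_mul (Complex.I * c)
    exact ((h2.cexp.mul_const (Complex.I * c)).mul_const (ψ:ℂ)).deriv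
  -- space derivative
  have hSd2 : deriv (deriv (fun y : ℝ =>
      Complex.exp (Complex.I * c * t) * ((β₂ * sn (ℓ * y) : ℝ) : ℂ))) x
      = Complex.exp (Complex.I * c * t) * ((β₂ * (deriv (deriv sn) (ℓ*x) * ℓ * ℓ) : ℝ) : ℂ) := by
    have hd1 : deriv (fun y : ℝ => Complex.exp (Complex.I * c * t) * ((β₂ * sn (ℓ * y) : ℝ) : ℂ))
        = fun y : ℝ => Complex.exp (Complex.I * c * t) * ((β₂ * (deriv sn (ℓ*y) * ℓ) : ℝ) : ℂ) := by
      funext y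
      exact ((hψd y).ofReal_comp.const_mul (Complex.exp (Complex.I * c * t))).deriv
    rw [hd1]
    have dl : HasDerivAt (fun y : ℝ => ℓ * y) ℓ x := by
      simpa using (hasDerivAt_id x).const_mul ℓ
    exact (((((dsn1 (ℓ*x)).hasDerivAt.comp x dl).mul_const ℓ).const_mul β₂).ofReal_comp.const_mul
      (Complex.exp (Complex.I * c * t))).deriv
  rw [hT2, hSd2]
  have habs : ‖Complex.exp (Complex.I * c * t) * ((ψ:ℝ):ℂ)‖ = |ψ| := by
    rw [norm_mul, Complex.norm_exp]
    simp [Complex.mul_re]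
  rw [habs]
  have habs2 : ((|ψ| : ℝ) : ℂ)^2 = ((ψ:ℝ):ℂ)^2 := by
    rw [← Complex.ofReal_pow, ← Complex.ofReal_pow, sq_abs]
  rw [habs2]
  have hreal := part1 x
  rw [hψd2 x] at hreal
  have hr2 : β₂ * (deriv (deriv sn) (ℓ*x) * ℓ * ℓ) = -((1+c^2)*ψ - ψ^3) := by
    rw [hψdef]; linarith
  rw [hr2]
  push_cast
  linear_combination (Complex.exp (Complex.I * c * t) * (c:ℂ)^2 * (ψ:ℂ)) * Complex.I_mul_I
end
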